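/- Let X be a finite pre-ordered set (not necessarily connected) and R a 2-torsion free commutative ring with unity. Then every Lie triple derivation of I(X,R) is proper. -/

import Mathlib

open IncidenceAlgebra
open scoped Classical

variable {R X : Type*}

/-- The matrix unit `e_{x y}` of the incidence algebra (zero if `¬ x ≤ y`). -/
noncomputable def matrixUnit [CommRing R] [Preorder X] [DecidableEq X] (x y : X) :
    IncidenceAlgebra R X :=
  ⟨fun u v => if u = x ∧ v = y ∧ x ≤ y then 1 else 0, fun a b hab => by
    try dsimp only
    split_ifs with h
    · exact absurd (by rw [h.1, h.2.1]; exact h.2.2) hab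
    · rfl⟩

/-- The Lie bracket `[f,g] = fg - gf`. -/
def lieBr {A : Type*} [Ring A] (f g : A) : A := f * g - g * f

/-- `L` is a Lie triple derivation of the incidence algebra. -/
def IsLieTripleDer [CommRing R] [Preorder X] [DecidableEq X] [LocallyFiniteOrder X]
    (L : IncidenceAlgebra R X →ₗ[R] IncidenceAlgebra R X) : Prop :=
  ∀ f g h : IncidenceAlgebra R X,
    L (lieBr (lieBr f g) h) =
      lieBr (lieBr (L f) g) h + lieBr (lieBr f (L g)) h + lieBr (lieBr f g) (L h)

/-- `X` is connected: any two points are joined by a chain of comparabilities. -/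
def OrdConnected' (X : Type*) [Preorder X] : Prop :=
  ∀ x y : X, Relation.ReflTransGen (fun a b : X => a ≤ b ∨ b ≤ a) x y

/-- `R` is 2-torsion free. -/
def TwoTorsionFree (R : Type*) [CommRing R] : Prop := ∀ r : R, r + r = 0 → r = 0

/-- A Lie triple derivation is proper: a derivation plus a central-valued linear map
annihilating second commutators. -/
def IsProperLTD [CommRing R] [Preorder X] [DecidableEq X] [LocallyFiniteOrder X]
    (L : IncidenceAlgebra R X →ₗ[R] IncidenceAlgebra R X) : Prop :=
  ∃ D F : IncidenceAlgebra R X →ₗ[R] IncidenceAlgebra R X,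
    (∀ f g : IncidenceAlgebra R X, D (f * g) = D f * g + f * D g) ∧
    (∀ f : IncidenceAlgebra R X, F f ∈ Set.center (IncidenceAlgebra R X)) ∧
    (∀ f g h : IncidenceAlgebra R X, F (lieBr (lieBr f g) h) = 0) ∧
    L = D + F

/-!
Evaluating the Lie triple identity on triples of matrix units `e x y` determines `L` on them.
The off-diagonal entries of the `L (e x x)` assemble into an element `b`, and the entries
`σ x y = L (e x y) x y` (`x ≠ y`) form a transitive map. Then `D f = b f - f b + σ ⊙ f` is a
derivation with `L (e x y) = D (e x y)` for `x ≠ y`, while `L (e x x) - D (e x x)` is diagonal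
with diagonal constant along `≤`, hence central. Both the transitivity of `σ` around cycles
`x ≤ y ≤ x` and the constancy of the diagonal of `L (e x x)` (which comes from
`∑ x, e x x = 1`) are obtained only after cancelling a factor 2. Finally, a central-valued
difference between a Lie triple derivation and a derivation annihilates second commutators.
Constancy along `≤` describes the centre directly, so no reduction to connected components is
needed.
-/

section MatrixUnits

lemma IncidenceAlgebra.sum_apply [AddCommMonoid R] [LE X] {ι : Type*} (s : Finset ι)
    (g : ι → IncidenceAlgebra R X) (u v : X) : (∑ i ∈ s, g i) u v = ∑ i ∈ s, g i u v :=
  map_sum (⟨⟨fun f => f u v, rfl⟩, fun _ _ => rfl⟩ : IncidenceAlgebra R X →+ R) g s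

variable [CommRing R] [Preorder X] [DecidableEq X]

lemma matrixUnit_apply (x y u v : X) :
    (matrixUnit x y : IncidenceAlgebra R X) u v = if u = x ∧ v = y ∧ x ≤ y then 1 else 0 :=
  rfl

lemma matrixUnit_eq_zero {x y : X} (h : ¬x ≤ y) :
    (matrixUnit x y : IncidenceAlgebra R X) = 0 := by
  ext u v _
  simp [matrixUnit_apply, h]

lemma sum_matrixUnit_self [Fintype X] : ∑ w : X, matrixUnit w w = (1 : IncidenceAlgebra R X) := by
  ext u v _
  rw [IncidenceAlgebra.sum_apply, Finset.sum_eq_single u]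
  · simp [matrixUnit_apply, eq_comm]
  · intro w _ hwu
    simp [matrixUnit_apply, Ne.symm hwu]
  · simp

lemma sum_smul_matrixUnit [Fintype X] (f : IncidenceAlgebra R X) :
    ∑ p : X × X, f p.1 p.2 • matrixUnit p.1 p.2 = f := by
  ext u v huv
  rw [IncidenceAlgebra.sum_apply, Finset.sum_eq_single (u, v)]
  · simp [matrixUnit_apply, huv]
  · rintro ⟨a, b⟩ - hab
    rw [constSMul_apply, matrixUnit_apply, if_neg, smul_zero]
    rintro ⟨rfl, rfl, -⟩
    exact hab rfl
  · simp

variable [LocallyFiniteOrder X]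

@[simp]
lemma matrixUnit_mul_apply (x y : X) (f : IncidenceAlgebra R X) (u v : X) :
    (matrixUnit x y * f : IncidenceAlgebra R X) u v = if u = x ∧ x ≤ y then f y v else 0 := by
  by_cases hyv : y ≤ v
  · simp only [IncidenceAlgebra.mul_apply, matrixUnit_apply, ite_and, ite_mul, one_mul, zero_mul,
      Finset.sum_ite_irrel, Finset.sum_ite_eq', Finset.mem_Icc, Finset.sum_const_zero]
    split_ifs <;> simp_all
  · simp [matrixUnit_apply, hyv, ite_and, apply_eq_zero_of_not_le hyv]

@[simp]
lemma mul_matrixUnit_apply (x y : X) (f : IncidenceAlgebra R X) (u v : X) :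
    (f * matrixUnit x y : IncidenceAlgebra R X) u v = if v = y ∧ x ≤ y then f u x else 0 := by
  by_cases hux : u ≤ x
  · simp only [IncidenceAlgebra.mul_apply, matrixUnit_apply, ite_and, mul_ite, mul_one, mul_zero,
      Finset.sum_ite_eq', Finset.mem_Icc]
    split_ifs <;> simp_all
  · simp [matrixUnit_apply, hux, ite_and, apply_eq_zero_of_not_le hux]

lemma matrixUnit_mul_matrixUnit (x y z w : X) :
    (matrixUnit x y * matrixUnit z w : IncidenceAlgebra R X) =
      if y = z ∧ x ≤ y ∧ z ≤ w then matrixUnit x w else 0 := by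
  ext u v _
  rw [matrixUnit_mul_apply, apply_ite (fun f : IncidenceAlgebra R X => f u v)]
  by_cases h : y = z ∧ x ≤ y ∧ z ≤ w
  · obtain ⟨rfl, hxy, hyw⟩ := h
    simp [matrixUnit_apply, hxy, hyw, hxy.trans hyw, ite_and]
  · simp only [matrixUnit_apply, if_neg h, IncidenceAlgebra.zero_apply]
    split_ifs <;> tauto

lemma lieBr_matrixUnit_self_of_ne {x y : X} (hxy : x ≠ y) :
    lieBr (matrixUnit x x) (matrixUnit y y) = (0 : IncidenceAlgebra R X) := by
  simp [lieBr, matrixUnit_mul_matrixUnit, hxy, hxy.symm]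

lemma lieBr_matrixUnit_self_left {x y : X} (hxy : x ≤ y) (hne : x ≠ y) :
    lieBr (matrixUnit x x) (matrixUnit x y) = (matrixUnit x y : IncidenceAlgebra R X) := by
  simp [lieBr, matrixUnit_mul_matrixUnit, hxy, hne.symm]

lemma lieBr_matrixUnit_self_right {x y : X} (hxy : x ≤ y) (hne : x ≠ y) :
    lieBr (matrixUnit x y) (matrixUnit y y) = (matrixUnit x y : IncidenceAlgebra R X) := by
  simp [lieBr, matrixUnit_mul_matrixUnit, hxy, hne.symm]

end MatrixUnits

section Center
variable [CommRing R] [Preorder X] [LocallyFiniteOrder X]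

instance IncidenceAlgebra.instIsScalarTowerSelf :
    IsScalarTower R (IncidenceAlgebra R X) (IncidenceAlgebra R X) where
  smul_assoc r f g := by
    ext u v _
    simp only [smul_eq_mul, mul_apply, constSMul_apply, Finset.mul_sum, mul_assoc]

instance IncidenceAlgebra.instSMulCommClassSelf :
    SMulCommClass R (IncidenceAlgebra R X) (IncidenceAlgebra R X) where
  smul_comm r f g := by
    ext u v _
    simp only [smul_eq_mul, mul_apply, constSMul_apply, Finset.mul_sum, mul_left_comm]

lemma IncidenceAlgebra.mem_center_of_diagonal {f : IncidenceAlgebra R X}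
    (hoff : ∀ u v, u ≠ v → f u v = 0) (hdiag : ∀ u v, u ≤ v → f u u = f v v) :
    f ∈ Set.center (IncidenceAlgebra R X) := by
  rw [Semigroup.mem_center_iff]
  intro g
  ext u v huv
  rw [mul_apply, mul_apply, Finset.sum_eq_single v, Finset.sum_eq_single u, hdiag u v huv,
    mul_comm]
  · exact fun w _ hwu => by rw [hoff u w (Ne.symm hwu), zero_mul]
  · simp [huv]
  · exact fun w _ hwv => by rw [hoff w v hwv, mul_zero]
  · simp [huv]

lemma LinearMap.apply_mem_center_of_matrixUnit [DecidableEq X] [Fintype X]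
    {F : IncidenceAlgebra R X →ₗ[R] IncidenceAlgebra R X}
    (h : ∀ x y, x ≤ y → F (matrixUnit x y) ∈ Set.center (IncidenceAlgebra R X))
    (f : IncidenceAlgebra R X) : F f ∈ Set.center (IncidenceAlgebra R X) := by
  rw [← sum_smul_matrixUnit f, map_sum]
  refine Finset.sum_induction _ (· ∈ Set.center _) (fun _ _ => Set.add_mem_center)
    Set.zero_mem_center fun p _ => ?_
  rw [map_smul]
  refine Set.smul_mem_center _ ?_
  by_cases hp : p.1 ≤ p.2
  · exact h _ _ hp
  · rw [matrixUnit_eq_zero hp, map_zero]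
    exact Set.zero_mem_center

end Center

namespace IncidenceAlgebra

def IsTransitiveMap [Add R] [LE X] (σ : X → X → R) : Prop :=
  ∀ u w v : X, u ≤ w → w ≤ v → σ u v = σ u w + σ w v

def hadamard [CommSemiring R] [Preorder X] (σ : X → X → R) :
    IncidenceAlgebra R X →ₗ[R] IncidenceAlgebra R X where
  toFun f := ⟨fun u v => σ u v * f u v, fun u v h => by
    rw [apply_eq_zero_of_not_le h, mul_zero]⟩
  map_add' f g := by ext u v _; exact mul_add _ _ _
  map_smul' r f := by ext u v _; exact mul_left_comm _ _ _

lemma hadamard_apply [CommSemiring R] [Preorder X] (σ : X → X → R) (f : IncidenceAlgebra R X)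
    (u v : X) : hadamard σ f u v = σ u v * f u v :=
  rfl

variable [CommRing R] [Preorder X] [LocallyFiniteOrder X]

lemma hadamard_mul {σ : X → X → R} (hσ : IsTransitiveMap σ) (f g : IncidenceAlgebra R X) :
    hadamard σ (f * g) = hadamard σ f * g + f * hadamard σ g := by
  ext u v _
  simp only [add_apply, hadamard_apply, mul_apply, Finset.mul_sum, ← Finset.sum_add_distrib]
  refine Finset.sum_congr rfl fun w hw => ?_
  obtain ⟨huw, hwv⟩ := Finset.mem_Icc.mp hw
  rw [hσ u w v huw hwv]
  ring

def derivationOf (b : IncidenceAlgebra R X) (σ : X → X → R) :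
    IncidenceAlgebra R X →ₗ[R] IncidenceAlgebra R X :=
  LinearMap.mulLeft R b - LinearMap.mulRight R b + hadamard σ

lemma derivationOf_apply (b : IncidenceAlgebra R X) (σ : X → X → R)
    (f : IncidenceAlgebra R X) : derivationOf b σ f = b * f - f * b + hadamard σ f :=
  rfl

lemma derivationOf_mul [DecidableEq X] (b : IncidenceAlgebra R X) {σ : X → X → R}
    (hσ : IsTransitiveMap σ) (f g : IncidenceAlgebra R X) :
    derivationOf b σ (f * g) = derivationOf b σ f * g + f * derivationOf b σ g := by
  simp only [derivationOf_apply, hadamard_mul hσ]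
  noncomm_ring

end IncidenceAlgebra

section LieTriple
variable {S A : Type*} [Semiring S] [Ring A] [Module S A]

theorem sub_apply_lieBr_lieBr_eq_zero {L D : A →ₗ[S] A}
    (hL : ∀ f g h : A, L (lieBr (lieBr f g) h) =
      lieBr (lieBr (L f) g) h + lieBr (lieBr f (L g)) h + lieBr (lieBr f g) (L h))
    (hD : ∀ f g : A, D (f * g) = D f * g + f * D g) (hLD : ∀ f, (L - D) f ∈ Set.center A)
    (f g h : A) : (L - D) (lieBr (lieBr f g) h) = 0 := by
  have hD_lieBr (a c : A) : D (lieBr a c) = lieBr (D a) c + lieBr a (D c) := by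
    simp only [lieBr, map_sub, hD]
    abel
  have lieBr_left (a c : A) : lieBr ((L - D) a) c = 0 := sub_eq_zero.mpr ((hLD a).comm c).eq
  have lieBr_right (a c : A) : lieBr c ((L - D) a) = 0 :=
    sub_eq_zero.mpr ((hLD a).comm c).eq.symm
  calc (L - D) (lieBr (lieBr f g) h)
      = lieBr (lieBr ((L - D) f) g) h + lieBr (lieBr f ((L - D) g)) h +
          lieBr (lieBr f g) ((L - D) h) := by
        rw [LinearMap.sub_apply, hL, hD_lieBr, hD_lieBr]
        simp only [LinearMap.sub_apply, lieBr]
        noncomm_ring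
    _ = 0 := by
        rw [lieBr_left, lieBr_right, lieBr_right]
        simp [lieBr]

end LieTriple

theorem isProperLTD_of_sub_mem_center [CommRing R] [Preorder X] [DecidableEq X]
    [LocallyFiniteOrder X] {L D : IncidenceAlgebra R X →ₗ[R] IncidenceAlgebra R X}
    (hL : IsLieTripleDer L) (hD : ∀ f g, D (f * g) = D f * g + f * D g)
    (hLD : ∀ f, (L - D) f ∈ Set.center (IncidenceAlgebra R X)) : IsProperLTD L :=
  ⟨D, L - D, hD, hLD, sub_apply_lieBr_lieBr_eq_zero hL hD hLD, (add_sub_cancel D L).symm⟩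

namespace IsLieTripleDer
variable [CommRing R] [Preorder X] [DecidableEq X] [LocallyFiniteOrder X]
  {L : IncidenceAlgebra R X →ₗ[R] IncidenceAlgebra R X}

lemma triple_matrixUnit_self_of_ne (hL : IsLieTripleDer L) {x y : X} (hxy : x ≠ y) :
    lieBr (lieBr (L (matrixUnit x x)) (matrixUnit y y)) (matrixUnit x x) +
      lieBr (lieBr (matrixUnit x x) (L (matrixUnit y y))) (matrixUnit x x) = 0 := by
  have h := hL (matrixUnit x x) (matrixUnit y y) (matrixUnit x x)
  rw [lieBr_matrixUnit_self_of_ne hxy] at h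
  simpa [lieBr] using h.symm

lemma apply_matrixUnit_self_apply_eq_zero (hL : IsLieTripleDer L) {x y u : X} (hxy : x ≠ y)
    (hux : u ≠ x) (huy : u ≠ y) : L (matrixUnit y y) u x = 0 := by
  have h := congr($(hL.triple_matrixUnit_self_of_ne hxy) u x)
  simp only [lieBr, sub_mul, mul_sub, IncidenceAlgebra.sub_apply, IncidenceAlgebra.add_apply,
    IncidenceAlgebra.zero_apply, matrixUnit_mul_apply, mul_matrixUnit_apply] at h
  simp only [le_refl, and_self, ↓reduceIte, hxy, and_true, huy, sub_self, hux, zero_sub,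
    sub_zero, zero_add, neg_eq_zero] at h
  exact h

lemma apply_matrixUnit_self_apply_swap (hL : IsLieTripleDer L) {x y : X} (hxy : x ≠ y) :
    L (matrixUnit y y) y x = -L (matrixUnit x x) y x := by
  have h := congr($(hL.triple_matrixUnit_self_of_ne hxy) y x)
  simp only [lieBr, sub_mul, mul_sub, IncidenceAlgebra.sub_apply, IncidenceAlgebra.add_apply,
    IncidenceAlgebra.zero_apply, matrixUnit_mul_apply, mul_matrixUnit_apply] at h
  simp only [le_refl, and_self, ↓reduceIte, hxy, and_true, zero_sub, hxy.symm, sub_self,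
    sub_zero] at h
  linear_combination -h

lemma apply_matrixUnit_eq (hL : IsLieTripleDer L) {x y : X} (hxy : x ≤ y) (hne : x ≠ y) :
    L (matrixUnit x y) =
      lieBr (lieBr (L (matrixUnit x x)) (matrixUnit x y)) (matrixUnit y y) +
        lieBr (lieBr (matrixUnit x x) (L (matrixUnit x y))) (matrixUnit y y) +
        lieBr (matrixUnit x y) (L (matrixUnit y y)) := by
  have h := hL (matrixUnit x x) (matrixUnit x y) (matrixUnit y y)
  rwa [lieBr_matrixUnit_self_left hxy hne, lieBr_matrixUnit_self_right hxy hne] at h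

lemma apply_matrixUnit_apply (hL : IsLieTripleDer L) {x y : X} (hxy : x ≤ y) (hne : x ≠ y)
    (u v : X) :
    L (matrixUnit x y) u v =
      (if v = y then L (matrixUnit x x) u x - L (matrixUnit y y) u x else 0) +
        (if u = x then L (matrixUnit y y) y v else 0) +
        (if u = x ∧ v = y then L (matrixUnit x y) x y - L (matrixUnit x x) y y else 0) -
        (if u = y ∧ v = y then L (matrixUnit x x) y x else 0) +
        (if u = y ∧ v = x then L (matrixUnit x y) y x else 0) := by
  conv_lhs => rw [hL.apply_matrixUnit_eq hxy hne]
  simp only [lieBr, sub_mul, mul_sub, IncidenceAlgebra.sub_apply, IncidenceAlgebra.add_apply,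
    matrixUnit_mul_apply, mul_matrixUnit_apply]
  by_cases hux : u = x <;> by_cases huy : u = y <;> by_cases hvx : v = x <;>
    by_cases hvy : v = y <;> simp_all <;> ring

lemma apply_one_apply_self_eq (hL : IsLieTripleDer L) {x y : X} (hxy : x ≤ y) :
    L 1 x x = L 1 y y := by
  rcases eq_or_ne x y with rfl | hne
  · rfl
  have h := congr($(hL 1 (matrixUnit x y) (matrixUnit y y)) x y)
  simp only [lieBr, one_mul, mul_one, sub_self, zero_mul, mul_sub, sub_mul,
    IncidenceAlgebra.sub_apply, IncidenceAlgebra.add_apply, IncidenceAlgebra.zero_apply,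
    matrixUnit_mul_apply, mul_matrixUnit_apply] at h
  simp only [mul_zero, sub_self, map_zero, coe_zero, Pi.zero_apply, le_refl, and_self,
    ↓reduceIte, hxy, hne, and_true, sub_zero, add_zero] at h
  linear_combination -h

lemma apply_matrixUnit_self_apply_self_eq_of_ne (hL : IsLieTripleDer L) {x u v : X}
    (huv : u ≤ v) (hux : u ≠ x) (hvx : v ≠ x) :
    L (matrixUnit x x) u u = L (matrixUnit x x) v v := by
  rcases eq_or_ne u v with rfl | hne
  · rfl
  have hb : lieBr (matrixUnit x x) (matrixUnit u v) = (0 : IncidenceAlgebra R X) := by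
    simp [lieBr, matrixUnit_mul_matrixUnit, hux.symm, hvx]
  have h := hL (matrixUnit x x) (matrixUnit u v) (matrixUnit v v)
  rw [hb] at h
  have h := congr($h u v)
  simp only [lieBr, zero_mul, mul_zero, sub_zero, map_zero, mul_sub, sub_mul,
    IncidenceAlgebra.sub_apply, IncidenceAlgebra.add_apply, IncidenceAlgebra.zero_apply,
    matrixUnit_mul_apply, mul_matrixUnit_apply] at h
  simp only [le_refl, and_self, ↓reduceIte, huv, hne, and_true, sub_self, sub_zero, hux, hvx,
    add_zero] at h
  linear_combination -h

lemma apply_matrixUnit_self_sub_eq (hL : IsLieTripleDer L) {x y : X} (hxy : x ≤ y)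
    (hne : x ≠ y) :
    L (matrixUnit x x) x x - L (matrixUnit x x) y y =
      L (matrixUnit y y) x x - L (matrixUnit y y) y y := by
  have h := hL.apply_matrixUnit_apply hxy hne x y
  simp only [↓reduceIte, and_self, hne, and_true, sub_zero, false_and, add_zero] at h
  linear_combination -h

lemma apply_matrixUnit_self_apply_self_eq [Fintype X] (hL : IsLieTripleDer L)
    (htf : TwoTorsionFree R) (x : X) {u v : X} (huv : u ≤ v) :
    L (matrixUnit x x) u u = L (matrixUnit x x) v v := by
  rcases eq_or_ne u v with rfl | hne
  · rfl
  set d : X → R := fun w => L (matrixUnit w w) u u - L (matrixUnit w w) v v with hd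
  have hsum : ∑ w, d w = 0 := by
    rw [Finset.sum_sub_distrib, ← IncidenceAlgebra.sum_apply, ← IncidenceAlgebra.sum_apply,
      ← map_sum, sum_matrixUnit_self, hL.apply_one_apply_self_eq huv, sub_self]
  have hpair : d u + d v = 0 := by
    rw [← Finset.sum_pair hne, ← hsum]
    refine Finset.sum_subset (Finset.subset_univ _) fun w _ hw => ?_
    simp only [Finset.mem_insert, Finset.mem_singleton, not_or] at hw
    simp only [hd, hL.apply_matrixUnit_self_apply_self_eq_of_ne huv (Ne.symm hw.1) (Ne.symm hw.2),
      sub_self]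
  have hdu : d u = 0 :=
    htf _ (by linear_combination hpair + hL.apply_matrixUnit_self_sub_eq huv hne)
  by_cases hux : u = x
  · subst hux
    exact sub_eq_zero.mp hdu
  by_cases hvx : v = x
  · subst hvx
    exact sub_eq_zero.mp (by linear_combination hpair - hdu)
  exact hL.apply_matrixUnit_self_apply_self_eq_of_ne huv hux hvx

lemma apply_matrixUnit_add_self_eq (hL : IsLieTripleDer L) {x y : X} (hxy : x ≤ y)
    (hyx : y ≤ x) (hne : x ≠ y) :
    L (matrixUnit x y + matrixUnit x y) =
      lieBr (lieBr (L (matrixUnit x y)) (matrixUnit y x)) (matrixUnit x y) +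
        lieBr (lieBr (matrixUnit x y) (L (matrixUnit y x))) (matrixUnit x y) +
        lieBr (matrixUnit x x - matrixUnit y y) (L (matrixUnit x y)) := by
  have h₁ : lieBr (matrixUnit x y) (matrixUnit y x) =
      (matrixUnit x x - matrixUnit y y : IncidenceAlgebra R X) := by
    simp [lieBr, matrixUnit_mul_matrixUnit, hxy, hyx]
  have h₂ : lieBr (matrixUnit x x - matrixUnit y y) (matrixUnit x y) =
      (matrixUnit x y + matrixUnit x y : IncidenceAlgebra R X) := by
    simp [lieBr, sub_mul, mul_sub, matrixUnit_mul_matrixUnit, hxy, hne.symm]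
  have h := hL (matrixUnit x y) (matrixUnit y x) (matrixUnit x y)
  rwa [h₁, h₂] at h

lemma apply_matrixUnit_apply_swap (hL : IsLieTripleDer L) (htf : TwoTorsionFree R) {x y : X}
    (hne : x ≠ y) : L (matrixUnit x y) y x = 0 := by
  by_cases hxy : x ≤ y
  · by_cases hyx : y ≤ x
    · have h := congr($(hL.apply_matrixUnit_add_self_eq hxy hyx hne) y x)
      simp only [map_add, lieBr, sub_mul, mul_sub, IncidenceAlgebra.sub_apply,
        IncidenceAlgebra.add_apply, matrixUnit_mul_apply, mul_matrixUnit_apply] at h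
      simp only [hne, hxy, and_true, ↓reduceIte, sub_self, hne.symm, add_zero, le_refl,
        and_self, zero_sub, sub_zero, zero_add] at h
      exact htf _ (htf _ (by linear_combination h))
    · exact apply_eq_zero_of_not_le hyx _
  · rw [matrixUnit_eq_zero hxy, map_zero, IncidenceAlgebra.zero_apply]

lemma apply_matrixUnit_add_apply_matrixUnit_swap (hL : IsLieTripleDer L)
    (htf : TwoTorsionFree R) {x y : X} (hxy : x ≤ y) (hyx : y ≤ x) (hne : x ≠ y) :
    L (matrixUnit x y) x y + L (matrixUnit y x) y x = 0 := by
  have h := congr($(hL.apply_matrixUnit_add_self_eq hxy hyx hne) x y)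
  simp only [map_add, lieBr, sub_mul, mul_sub, IncidenceAlgebra.sub_apply,
    IncidenceAlgebra.add_apply, matrixUnit_mul_apply, mul_matrixUnit_apply] at h
  simp only [hxy, and_self, ↓reduceIte, hyx, hne, and_true, sub_zero, hne.symm, zero_sub,
    sub_neg_eq_add, le_refl, right_eq_add] at h
  exact htf _ (by linear_combination h)

lemma apply_matrixUnit_apply_trans (hL : IsLieTripleDer L) {x y z : X} (hxy : x ≤ y)
    (hyz : y ≤ z) (hnexy : x ≠ y) (hneyz : y ≠ z) (hnexz : x ≠ z) :
    L (matrixUnit x z) x z = L (matrixUnit x y) x y + L (matrixUnit y z) y z +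
      (L (matrixUnit z z) z z - L (matrixUnit z z) x x) := by
  have hxz := hxy.trans hyz
  have h₁ : lieBr (matrixUnit x y) (matrixUnit y z) =
      (matrixUnit x z : IncidenceAlgebra R X) := by
    simp [lieBr, matrixUnit_mul_matrixUnit, hxy, hyz, hnexz.symm]
  have h := hL (matrixUnit x y) (matrixUnit y z) (matrixUnit z z)
  rw [h₁, lieBr_matrixUnit_self_right hxz hnexz] at h
  have h := congr($h x z)
  simp only [lieBr, sub_mul, mul_sub, IncidenceAlgebra.sub_apply,
    IncidenceAlgebra.add_apply, matrixUnit_mul_apply, mul_matrixUnit_apply] at h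
  simp only [le_refl, and_self, ↓reduceIte, hyz, hnexy, and_true, sub_zero, hnexz, sub_self,
    hxy, hneyz.symm, hxz] at h
  linear_combination h

end IsLieTripleDer

section Decomposition
variable [CommRing R] [Preorder X] [DecidableEq X]

noncomputable def innerCoeff (L : IncidenceAlgebra R X →ₗ[R] IncidenceAlgebra R X) :
    IncidenceAlgebra R X :=
  ⟨fun u v => if u = v then 0 else -L (matrixUnit u u) u v, fun u v huv => by
    split_ifs
    · rfl
    · rw [apply_eq_zero_of_not_le huv, neg_zero]⟩

lemma innerCoeff_apply (L : IncidenceAlgebra R X →ₗ[R] IncidenceAlgebra R X) (u v : X) :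
    innerCoeff L u v = if u = v then 0 else -L (matrixUnit u u) u v :=
  rfl

noncomputable def transitiveCoeff (L : IncidenceAlgebra R X →ₗ[R] IncidenceAlgebra R X)
    (u v : X) : R :=
  if u = v then 0 else L (matrixUnit u v) u v

variable [LocallyFiniteOrder X] {L : IncidenceAlgebra R X →ₗ[R] IncidenceAlgebra R X}

lemma IsLieTripleDer.isTransitiveMap_transitiveCoeff [Fintype X] (hL : IsLieTripleDer L)
    (htf : TwoTorsionFree R) : IsTransitiveMap (transitiveCoeff L) := by
  intro u w v huw hwv
  rcases eq_or_ne u w with rfl | hneuw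
  · simp [transitiveCoeff]
  rcases eq_or_ne w v with rfl | hnewv
  · simp [transitiveCoeff]
  rcases eq_or_ne u v with rfl | hneuv
  · simp only [transitiveCoeff, if_pos, if_neg hneuw, if_neg hnewv]
    linear_combination -hL.apply_matrixUnit_add_apply_matrixUnit_swap htf huw hwv hneuw
  · simp only [transitiveCoeff, if_neg hneuw, if_neg hnewv, if_neg hneuv]
    linear_combination hL.apply_matrixUnit_apply_trans huw hwv hneuw hnewv hneuv -
      hL.apply_matrixUnit_self_apply_self_eq htf v (huw.trans hwv)

lemma IsLieTripleDer.apply_matrixUnit_eq_derivationOf (hL : IsLieTripleDer L)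
    (htf : TwoTorsionFree R) {x y : X} (hxy : x ≤ y) (hne : x ≠ y) :
    L (matrixUnit x y) = derivationOf (innerCoeff L) (transitiveCoeff L) (matrixUnit x y) := by
  ext u v _
  rw [hL.apply_matrixUnit_apply hxy hne, derivationOf_apply]
  simp only [IncidenceAlgebra.add_apply, IncidenceAlgebra.sub_apply, matrixUnit_mul_apply,
    mul_matrixUnit_apply, hadamard_apply, matrixUnit_apply, innerCoeff_apply, transitiveCoeff]
  rcases eq_or_ne v y with rfl | hvy
  · rcases eq_or_ne u x with rfl | hux
    · simp only [↓reduceIte, and_self, hne, and_true, sub_zero, false_and, add_zero, hxy,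
        sub_self, mul_one, zero_add]
      linear_combination hL.apply_matrixUnit_self_sub_eq hxy hne
    rcases eq_or_ne u v with rfl | huv
    · simp [hux, hxy]
    · simp only [↓reduceIte, hux, add_zero, and_true, huv, sub_zero, false_and, hxy, and_self,
        mul_zero]
      rw [hL.apply_matrixUnit_self_apply_eq_zero hne hux huv,
        hL.apply_matrixUnit_self_apply_swap hux.symm]
      ring
  · rcases eq_or_ne u x with rfl | hux
    · simp [hvy, Ne.symm hvy, hxy, hne]
    · simp only [hvy, ↓reduceIte, hux, add_zero, and_self, and_false, sub_self, zero_add,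
        false_and, mul_zero, ite_eq_right_iff, and_imp]
      rintro rfl rfl
      exact hL.apply_matrixUnit_apply_swap htf hne

lemma IsLieTripleDer.sub_derivationOf_matrixUnit_self_mem_center [Fintype X]
    (hL : IsLieTripleDer L) (htf : TwoTorsionFree R) (x : X) :
    L (matrixUnit x x) - derivationOf (innerCoeff L) (transitiveCoeff L) (matrixUnit x x) ∈
      Set.center (IncidenceAlgebra R X) := by
  have hD (u v : X) : derivationOf (innerCoeff L) (transitiveCoeff L) (matrixUnit x x) u v =
      (if v = x ∧ u ≠ x then -L (matrixUnit u u) u x else 0) +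
        (if u = x ∧ v ≠ x then L (matrixUnit x x) x v else 0) := by
    simp only [derivationOf_apply, IncidenceAlgebra.add_apply, IncidenceAlgebra.sub_apply,
      matrixUnit_mul_apply, mul_matrixUnit_apply, hadamard_apply, matrixUnit_apply,
      innerCoeff_apply, transitiveCoeff]
    rcases eq_or_ne u x with rfl | hux <;> rcases eq_or_ne u v with rfl | huv
    · simp
    · simp [huv, huv.symm]
    · simp [hux]
    · simp [hux, huv]
  refine mem_center_of_diagonal (fun u v huv => ?_) (fun u v huv => ?_)
  · rw [IncidenceAlgebra.sub_apply, hD]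
    rcases eq_or_ne u x with rfl | hux
    · simp [huv.symm]
    rcases eq_or_ne v x with rfl | hvx
    · simp [hux, hL.apply_matrixUnit_self_apply_swap hux.symm]
    · simp [hux, hvx, hL.apply_matrixUnit_self_apply_eq_zero hvx huv hux]
  · rw [IncidenceAlgebra.sub_apply, IncidenceAlgebra.sub_apply, hD, hD,
      hL.apply_matrixUnit_self_apply_self_eq htf x huv]
    simp

end Decomposition

/-- Every Lie triple derivation of the incidence algebra of a finite
pre-ordered set (not necessarily connected) over a 2-torsion free commutative ring is proper. -/
theorem lieTripleDer_proper_finite [CommRing R] [Preorder X] [DecidableEq X]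
    [Fintype X] [LocallyFiniteOrder X]
    (htf : TwoTorsionFree R)
    (L : IncidenceAlgebra R X →ₗ[R] IncidenceAlgebra R X) (hL : IsLieTripleDer L) :
    IsProperLTD L := by
  refine isProperLTD_of_sub_mem_center hL
    (derivationOf_mul (innerCoeff L) (hL.isTransitiveMap_transitiveCoeff htf))
    (LinearMap.apply_mem_center_of_matrixUnit fun x y hxy => ?_)
  rcases eq_or_ne x y with rfl | hne
  · exact hL.sub_derivationOf_matrixUnit_self_mem_center htf x
  · rw [LinearMap.sub_apply, hL.apply_matrixUnit_eq_derivationOf htf hxy hne, sub_self]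
    exact Set.zero_mem_center
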